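/- Self-dual representation: let φ be α-exponentially concave with α-gradient η = D^{(α)}φ and α-conjugate ψ(η) = c^{(α)}(ξ,η) - φ(ξ) for η = D^{(α)}φ(ξ). Then for all ξ, ξ' ∈ Ω, D^{(α)}[ξ : ξ'] = c^{(α)}(ξ, η') - φ(ξ) - ψ(η') where η' = D^{(α)}φ(ξ'). -/

import Mathlib

open scoped RealInnerProductSpace

noncomputable def alphaGrad {d : ℕ} (α : ℝ)
    (Dφ : EuclideanSpace ℝ (Fin d) → EuclideanSpace ℝ (Fin d))
    (ξ : EuclideanSpace ℝ (Fin d)) : EuclideanSpace ℝ (Fin d) :=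
  (1 - α * ⟪Dφ ξ, ξ⟫)⁻¹ • Dφ ξ

/-! Exponential concavity of `φ` bounds `exp (α (φ ξ - φ ξ'))` by the tangent value
`1 + α ⟪Dφ ξ', ξ - ξ'⟫`, which is therefore positive, so the logarithm in `D^{(α)}` is a genuine
one. The rest is the identity `1 + α ⟪ζ, η'⟫ = (1 + α ⟪Dφ ξ', ζ - ξ'⟫) / (1 - α ⟪Dφ ξ', ξ'⟫)`
for `η' = D^{(α)}φ(ξ')`, evaluated at `ζ = ξ` and `ζ = ξ'`. -/

section Tangent

variable {E : Type*} [NormedAddCommGroup E] [NormedSpace ℝ E] {s : Set E} {x y : E}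

theorem ConcaveOn.le_add_of_hasFDerivAt {f : E → ℝ} {f' : E →L[ℝ] ℝ} (hf : ConcaveOn ℝ s f)
    (hx : x ∈ s) (hy : y ∈ s) (hfx : HasFDerivAt f f' x) : f y ≤ f x + f' (y - x) := by
  let L : ℝ →ᵃ[ℝ] E := AffineMap.lineMap x y
  have hL0 : L 0 = x := AffineMap.lineMap_apply_zero _ _
  have hL1 : L 1 = y := AffineMap.lineMap_apply_one _ _
  have h0 : (0 : ℝ) ∈ L ⁻¹' s := by simpa [hL0] using hx
  have h1 : (1 : ℝ) ∈ L ⁻¹' s := by simpa [hL1] using hy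
  have hderiv : HasDerivAt (f ∘ L) (f' (y - x)) 0 :=
    (hL0 ▸ hfx).comp_hasDerivAt 0 AffineMap.hasDerivAt_lineMap
  have hslope := (hf.comp_affineMap L).slope_le_of_hasDerivAt h0 h1 zero_lt_one hderiv
  simp only [slope, Function.comp, hL0, hL1, sub_zero, inv_one, vsub_eq_sub, one_smul] at hslope
  linarith

theorem exp_mul_sub_le_one_add_of_concaveOn {φ : E → ℝ} {φ' : E →L[ℝ] ℝ} {α : ℝ}
    (hconc : ConcaveOn ℝ s fun z => Real.exp (α * φ z)) (hx : x ∈ s) (hy : y ∈ s)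
    (hφ : HasFDerivAt φ φ' x) : Real.exp (α * (φ y - φ x)) ≤ 1 + α * φ' (y - x) := by
  have hexp : HasFDerivAt (fun z => Real.exp (α * φ z))
      (Real.exp (α * φ x) • α • φ') x := (hφ.const_smul α).exp
  have htangent := hconc.le_add_of_hasFDerivAt hx hy hexp
  simp only [FunLike.coe_smul, Pi.smul_apply, smul_eq_mul] at htangent
  rw [mul_sub, Real.exp_sub, div_le_iff₀ (Real.exp_pos _)]
  linarith

end Tangent

theorem one_add_mul_inner_pos_of_concaveOn {F : Type*} [NormedAddCommGroup F]
    [InnerProductSpace ℝ F] [CompleteSpace F] {s : Set F} {φ : F → ℝ} {g x y : F} {α : ℝ}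
    (hconc : ConcaveOn ℝ s fun z => Real.exp (α * φ z)) (hx : x ∈ s) (hy : y ∈ s)
    (hφ : HasGradientAt φ g x) : 0 < 1 + α * ⟪g, y - x⟫ :=
  (Real.exp_pos _).trans_le
    (exp_mul_sub_le_one_add_of_concaveOn hconc hx hy hφ.hasFDerivAt)

theorem one_add_mul_inner_alphaGrad {d : ℕ} {α : ℝ}
    {Dφ : EuclideanSpace ℝ (Fin d) → EuclideanSpace ℝ (Fin d)} {ξ : EuclideanSpace ℝ (Fin d)}
    (h : 1 - α * ⟪Dφ ξ, ξ⟫ ≠ 0) (ζ : EuclideanSpace ℝ (Fin d)) :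
    1 + α * ⟪ζ, alphaGrad α Dφ ξ⟫ = (1 + α * ⟪Dφ ξ, ζ - ξ⟫) / (1 - α * ⟪Dφ ξ, ξ⟫) := by
  rw [alphaGrad, real_inner_smul_right, real_inner_comm (Dφ ξ) ζ, inner_sub_right]
  field_simp
  ring

theorem stmt10 {d : ℕ} (Ω : Set (EuclideanSpace ℝ (Fin d)))
    (α : ℝ)
    (φ ψ : EuclideanSpace ℝ (Fin d) → ℝ)
    (Dφ : EuclideanSpace ℝ (Fin d) → EuclideanSpace ℝ (Fin d))
    (hgrad : ∀ ζ ∈ Ω, HasGradientAt φ (Dφ ζ) ζ)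
    (hconc : ConcaveOn ℝ Ω (fun ξ => Real.exp (α * φ ξ)))
    (hpos : ∀ ζ ∈ Ω, 0 < 1 - α * ⟪Dφ ζ, ζ⟫)
    (hψ : ∀ ζ ∈ Ω, ψ (alphaGrad α Dφ ζ) =
      (1/α) * Real.log (1 + α * ⟪ζ, alphaGrad α Dφ ζ⟫) - φ ζ) :
    ∀ ξ ∈ Ω, ∀ ξ' ∈ Ω,
      (1/α) * Real.log (1 + α * ⟪Dφ ξ', ξ - ξ'⟫) - (φ ξ - φ ξ') =
        (1/α) * Real.log (1 + α * ⟪ξ, alphaGrad α Dφ ξ'⟫) - φ ξ -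
          ψ (alphaGrad α Dφ ξ') := by
  intro ξ hξ ξ' hξ'
  have hden := hpos ξ' hξ'
  have hnum := one_add_mul_inner_pos_of_concaveOn hconc hξ' hξ (hgrad ξ' hξ')
  rw [hψ ξ' hξ', one_add_mul_inner_alphaGrad hden.ne', one_add_mul_inner_alphaGrad hden.ne',
    sub_self, inner_zero_right, mul_zero, add_zero, Real.log_div hnum.ne' hden.ne',
    Real.log_div one_ne_zero hden.ne', Real.log_one]
  ring
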